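/- A band B of A is resonant if and only if q_∞ · ∏_{H_i ∈ P} q_i = 1, where P ⊆ A is the set of lines of A parallel to the boundary lines of B (including the boundary lines themselves); equivalently, if and only if ∏_{H_i ∈ Sep(U_1(B),U_2(B))} q_i = 1. In particular, whether a band is resonant depends only on the common direction of its boundary lines. -/

import Mathlib

/-! Let the band `B` lie between two lines parallel to `f = 0`, and let `t` be a coordinate along
them, so that `B = {lo < f < hi}` up to orientation. Writing a functional `g` not parallel to `f`
as a bounded function of `f` plus `cross f g * t`, for `|t| ≥ T` its sign on `B` is that of
`cross f g * t`: opposite at the two ends `{t > T}` and `{t < -T}` of `B`, while lines parallel to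
`f` miss `B`. The two ends are convex pieces of the complement and the rest of `B` is bounded, so
the two unbounded chambers of `B` contain one end each. Hence `Sep(U₁, U₂)` consists exactly of the
lines not parallel to `f`, and `Δ(U₁, U₂) = 0` iff `(∏_{Sep} r)² = ∏_{Sep} q = 1`. -/

open scoped Classical

noncomputable section

abbrev Pt : Type := ℝ × ℝ

/-- An affine-linear functional `a*x + b*y + c` on `ℝ²` with nonzero linear part. -/
structure AffForm : Type where
  a : ℝ
  b : ℝ
  c : ℝ
  nondeg : a ≠ 0 ∨ b ≠ 0

namespace AffForm

def eval (f : AffForm) (p : Pt) : ℝ := f.a * p.1 + f.b * p.2 + f.c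

def line (f : AffForm) : Set Pt := {p | f.eval p = 0}

def Parallel (f g : AffForm) : Prop := f.a * g.b = f.b * g.a

end AffForm

variable {n : ℕ}

/-- An arrangement: at least two distinct affine lines, not all parallel. -/
def IsArrangement (α : Fin n → AffForm) : Prop :=
  2 ≤ n ∧ (∀ i j : Fin n, i ≠ j → (α i).line ≠ (α j).line) ∧
    ∃ i j : Fin n, ¬ (α i).Parallel (α j)

def complement (α : Fin n → AffForm) : Set Pt := {p | ∀ i, (α i).eval p ≠ 0}

/-- A chamber: a connected component of the complement of the union of the lines. -/
def IsChamber (α : Fin n → AffForm) (C : Set Pt) : Prop :=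
  ∃ p ∈ complement α, C = connectedComponentIn (complement α) p

/-- `Sep(C, C')`: the set of indices `i` such that `α i` is positive on one of `C, C'`
and negative on the other. -/
def SepSet (α : Fin n → AffForm) (C C' : Set Pt) : Finset (Fin n) :=
  Finset.univ.filter fun i =>
    ((∀ p ∈ C, 0 < (α i).eval p) ∧ (∀ p ∈ C', (α i).eval p < 0)) ∨
    ((∀ p ∈ C, (α i).eval p < 0) ∧ (∀ p ∈ C', 0 < (α i).eval p))

/-- `Δ(C, C') = ∏_{i ∈ Sep(C,C')} r i − ∏_{i ∈ Sep(C,C')} (r i)⁻¹`. -/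
def Delta (α : Fin n → AffForm) (r : Fin n → ℂ) (C C' : Set Pt) : ℂ :=
  (∏ i ∈ SepSet α C C', r i) - ∏ i ∈ SepSet α C C', (r i)⁻¹

/-- The open strip between two parallel lines `f.line` and `g.line`. -/
def Strip (f g : AffForm) : Set Pt :=
  {p | ∀ q ∈ g.line,
    (0 < f.eval p ∧ f.eval p < f.eval q) ∨ (f.eval q < f.eval p ∧ f.eval p < 0)}

/-- A band: the open strip between two parallel lines of the arrangement containing no
other line of the arrangement parallel to them. -/
def IsBand (α : Fin n → AffForm) (B : Set Pt) : Prop :=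
  ∃ i j : Fin n, i ≠ j ∧ (α i).Parallel (α j) ∧ B = Strip (α i) (α j) ∧
    ∀ k : Fin n, (α k).Parallel (α i) → (α k).line ∩ B = ∅

/-- The data of a band `B` bounded by the parallel lines `H i` and `H j`, together with its
two unbounded chambers `U1` (= `U_1(B)`) and `U2` (= `U_2(B)`). -/
def BandData (α : Fin n → AffForm) (i j : Fin n) (B U1 U2 : Set Pt) : Prop :=
  i ≠ j ∧ (α i).Parallel (α j) ∧ B = Strip (α i) (α j) ∧
  (∀ k : Fin n, (α k).Parallel (α i) → (α k).line ∩ B = ∅) ∧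
  IsChamber α U1 ∧ IsChamber α U2 ∧ U1 ⊆ B ∧ U2 ⊆ B ∧
  ¬ Bornology.IsBounded U1 ∧ ¬ Bornology.IsBounded U2 ∧ U1 ≠ U2

open Set Filter

namespace AffForm

variable (f g : AffForm)

lemma continuous_eval : Continuous f.eval := by
  unfold eval
  fun_prop

def toAffineMap : Pt →ᵃ[ℝ] ℝ where
  toFun := f.eval
  linear := f.a • LinearMap.fst ℝ ℝ ℝ + f.b • LinearMap.snd ℝ ℝ ℝ
  map_vadd' p v := by
    simp only [eval, vadd_eq_add, Prod.fst_add, Prod.snd_add, LinearMap.add_apply,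
      LinearMap.smul_apply, LinearMap.fst_apply, LinearMap.snd_apply, smul_eq_mul]
    ring

lemma convex_preimage_eval {I : Set ℝ} (hI : Convex ℝ I) : Convex ℝ (f.eval ⁻¹' I) :=
  hI.affine_preimage f.toAffineMap

lemma pos_or_neg_of_isPreconnected {s : Set Pt} (hs : IsPreconnected s)
    (h : ∀ p ∈ s, f.eval p ≠ 0) : (∀ p ∈ s, 0 < f.eval p) ∨ (∀ p ∈ s, f.eval p < 0) := by
  by_contra! ⟨⟨p, hp, hfp⟩, ⟨p', hp', hfp'⟩⟩
  obtain ⟨x, hx, hfx⟩ := hs.intermediate_value hp hp' f.continuous_eval.continuousOn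
    ⟨(hfp.lt_of_ne (h p hp)).le, (hfp'.lt_of_ne' (h p' hp')).le⟩
  exact h x hx hfx

def normSq : ℝ := f.a ^ 2 + f.b ^ 2

lemma normSq_pos : 0 < f.normSq := by
  rcases f.nondeg with h | h <;> unfold normSq <;> positivity

/-- A coordinate along the lines parallel to `f.line`. -/
def perp : AffForm := ⟨-f.b, f.a, 0, f.nondeg.symm.imp neg_ne_zero.mpr id⟩

def cross : ℝ := f.a * g.b - f.b * g.a

lemma parallel_iff_cross_eq_zero : f.Parallel g ↔ f.cross g = 0 := sub_eq_zero.symm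

lemma normSq_mul_eval (p : Pt) :
    f.normSq * g.eval p = (f.a * g.a + f.b * g.b) * f.eval p + f.cross g * f.perp.eval p
      + (f.normSq * g.c - (f.a * g.a + f.b * g.b) * f.c) := by
  simp only [normSq, eval, cross, perp]
  ring

/-- Inverse of the coordinates `p ↦ (f.eval p, f.perp.eval p)`. -/
def pointAt (x u : ℝ) : Pt :=
  ((f.a * (x - f.c) - f.b * u) / f.normSq, (f.b * (x - f.c) + f.a * u) / f.normSq)

lemma eval_pointAt (x u : ℝ) : f.eval (f.pointAt x u) = x := by
  have := f.normSq_pos.ne'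
  simp only [eval, pointAt]
  field_simp
  simp only [normSq]
  ring

lemma perp_eval_pointAt (x u : ℝ) : f.perp.eval (f.pointAt x u) = u := by
  have := f.normSq_pos.ne'
  simp only [eval, perp, pointAt]
  field_simp
  simp only [normSq]
  ring

lemma pointAt_eval_perp_eval (p : Pt) : f.pointAt (f.eval p) (f.perp.eval p) = p := by
  have := f.normSq_pos.ne'
  ext <;> simp only [eval, perp, pointAt] <;> field_simp <;> simp only [normSq] <;> ring

lemma continuous_pointAt : Continuous fun x : ℝ × ℝ => f.pointAt x.1 x.2 := by
  unfold pointAt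
  fun_prop

lemma isBounded_eval_perp_eval_mem_Icc (a b c d : ℝ) :
    Bornology.IsBounded {p | f.eval p ∈ Icc a b ∧ f.perp.eval p ∈ Icc c d} := by
  refine (((isCompact_Icc (a := a) (b := b)).prod (isCompact_Icc (a := c) (b := d))).image
    f.continuous_pointAt).isBounded.subset ?_
  rintro p ⟨hx, hu⟩
  exact ⟨(f.eval p, f.perp.eval p), ⟨hx, hu⟩, f.pointAt_eval_perp_eval p⟩

lemma line_nonempty : f.line.Nonempty := ⟨f.pointAt 0 0, f.eval_pointAt 0 0⟩

variable {f g}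

lemma Parallel.symm (h : f.Parallel g) : g.Parallel f := by
  unfold Parallel at *
  linarith

lemma Parallel.trans {h : AffForm} (hfg : f.Parallel g) (hgh : g.Parallel h) :
    f.Parallel h := by
  unfold Parallel at *
  rcases g.nondeg with h0 | h0
  · exact mul_left_cancel₀ h0 (by linear_combination f.a * hgh + h.a * hfg)
  · exact mul_left_cancel₀ h0 (by linear_combination f.b * hgh + h.b * hfg)

lemma eventually_pos_cross_mul_perp_eval_mul_eval (hfg : ¬ f.Parallel g) (lo hi : ℝ) :
    ∀ᶠ T in atTop, ∀ p, f.eval p ∈ Icc lo hi → T < |f.perp.eval p| →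
      0 < f.cross g * f.perp.eval p * g.eval p := by
  set A := f.a * g.a + f.b * g.b
  set C := f.normSq * g.c - A * f.c
  have hw : 0 < |f.cross g| := abs_pos.mpr ((parallel_iff_cross_eq_zero f g).not.mp hfg)
  filter_upwards [eventually_ge_atTop ((|A| * (|lo| + |hi|) + |C|) / |f.cross g|)] with T hT p hx ht
  set E := A * f.eval p + C
  set s := f.cross g * f.perp.eval p
  have hEM : |E| ≤ |A| * (|lo| + |hi|) + |C| := by
    have hx' : |f.eval p| ≤ |lo| + |hi| := abs_le.mpr
      ⟨by linarith [neg_abs_le lo, abs_nonneg hi, hx.1],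
        by linarith [le_abs_self hi, abs_nonneg lo, hx.2]⟩
    calc |E| ≤ |A| * |f.eval p| + |C| := (abs_add_le _ _).trans_eq (by rw [abs_mul])
      _ ≤ |A| * (|lo| + |hi|) + |C| := by gcongr
  have hEs : |E| < |s| := by
    rw [div_le_iff₀ hw] at hT
    rw [abs_mul]
    nlinarith
  -- `normSq f * g.eval p = E + s` with `|E| < |s|`, so `g.eval p` has the sign of `s`.
  have hdecomp : f.normSq * (s * g.eval p) = s * E + s ^ 2 := by
    linear_combination s * normSq_mul_eval f g p
  have hpos : 0 < s * E + s ^ 2 := by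
    nlinarith [neg_abs_le (s * E), abs_mul s E, sq_abs s, abs_nonneg E]
  exact pos_of_mul_pos_right (hdecomp ▸ hpos) f.normSq_pos.le

def Separates (g : AffForm) (C C' : Set Pt) : Prop :=
  ((∀ p ∈ C, 0 < g.eval p) ∧ (∀ p ∈ C', g.eval p < 0)) ∨
    ((∀ p ∈ C, g.eval p < 0) ∧ (∀ p ∈ C', 0 < g.eval p))

variable {C C' : Set Pt} {x y : Pt}

lemma separates_of_eval_mul_eval_neg (hC : IsPreconnected C) (hC' : IsPreconnected C')
    (hC0 : ∀ p ∈ C, g.eval p ≠ 0) (hC'0 : ∀ p ∈ C', g.eval p ≠ 0) (hx : x ∈ C) (hy : y ∈ C')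
    (hxy : g.eval x * g.eval y < 0) : g.Separates C C' := by
  rcases g.pos_or_neg_of_isPreconnected hC hC0 with h | h <;>
    rcases g.pos_or_neg_of_isPreconnected hC' hC'0 with h' | h'
  · nlinarith [h x hx, h' y hy]
  · exact Or.inl ⟨h, h'⟩
  · exact Or.inr ⟨h, h'⟩
  · nlinarith [h x hx, h' y hy]

lemma not_separates_of_subset {S : Set Pt} (hS : IsPreconnected S) (hS0 : ∀ p ∈ S, g.eval p ≠ 0)
    (hCS : C ⊆ S) (hC'S : C' ⊆ S) (hx : x ∈ C) (hy : y ∈ C') : ¬ g.Separates C C' := by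
  rintro (⟨h, h'⟩ | ⟨h, h'⟩) <;>
    rcases g.pos_or_neg_of_isPreconnected hS hS0 with hS' | hS' <;>
    linarith [h x hx, h' y hy, hS' x (hCS hx), hS' y (hC'S hy)]

end AffForm

lemma strip_eq_preimage (f g : AffForm) :
    Strip f g = f.eval ⁻¹' ⋂ q ∈ g.line, uIoo 0 (f.eval q) := by
  ext p
  simp only [Strip, mem_ofPred_eq, mem_preimage, mem_iInter₂, uIoo_eq_union, mem_union, mem_Ioo]

lemma exists_strip_eq_preimage (f g : AffForm) :
    ∃ I : Set ℝ, Convex ℝ I ∧ (∃ lo hi, I ⊆ Icc lo hi) ∧ Strip f g = f.eval ⁻¹' I := by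
  obtain ⟨q, hq⟩ := g.line_nonempty
  exact ⟨⋂ q ∈ g.line, uIoo 0 (f.eval q), convex_iInter₂ fun _ _ => convex_Ioo _ _,
    ⟨0 ⊓ f.eval q, 0 ⊔ f.eval q, (biInter_subset_of_mem hq).trans Ioo_subset_Icc_self⟩,
    strip_eq_preimage f g⟩

lemma mem_sepSet {α : Fin n → AffForm} {C C' : Set Pt} {k : Fin n} :
    k ∈ SepSet α C C' ↔ (α k).Separates C C' := by
  simp [SepSet, AffForm.Separates]

namespace IsChamber

variable {α : Fin n → AffForm} {U U' : Set Pt}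

lemma isPreconnected (hU : IsChamber α U) : IsPreconnected U := by
  obtain ⟨p, -, rfl⟩ := hU
  exact isPreconnected_connectedComponentIn

lemma subset_complement (hU : IsChamber α U) : U ⊆ complement α := by
  obtain ⟨p, -, rfl⟩ := hU
  exact connectedComponentIn_subset _ _

lemma nonempty (hU : IsChamber α U) : U.Nonempty := by
  obtain ⟨p, hp, rfl⟩ := hU
  exact ⟨p, mem_connectedComponentIn hp⟩

lemma eq_of_mem (hU : IsChamber α U) (hU' : IsChamber α U') {x : Pt} (hx : x ∈ U)
    (hx' : x ∈ U') : U = U' := by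
  obtain ⟨p, -, rfl⟩ := hU
  obtain ⟨p', -, rfl⟩ := hU'
  rw [connectedComponentIn_eq hx, connectedComponentIn_eq hx']

lemma subset_of_isPreconnected {R : Set Pt} (hU : IsChamber α U) (hR : IsPreconnected R)
    (hRc : R ⊆ complement α) {x : Pt} (hxR : x ∈ R) (hxU : x ∈ U) : R ⊆ U := by
  obtain ⟨p, -, rfl⟩ := hU
  rw [connectedComponentIn_eq hxU]
  exact hR.subset_connectedComponentIn hxR hRc

lemma subset_or_subset_of_not_isBounded {R₁ R₂ M : Set Pt}
    (hU : IsChamber α U) (hUb : ¬ Bornology.IsBounded U) (hcover : U ⊆ R₁ ∪ R₂ ∪ M)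
    (hM : Bornology.IsBounded M) (h₁ : IsPreconnected R₁) (h₂ : IsPreconnected R₂)
    (h₁c : R₁ ⊆ complement α) (h₂c : R₂ ⊆ complement α) : R₁ ⊆ U ∨ R₂ ⊆ U := by
  obtain ⟨y, hyU, hyM⟩ := not_subset.mp fun h => hUb (hM.subset h)
  rcases hcover hyU with (hy | hy) | hy
  · exact Or.inl (hU.subset_of_isPreconnected h₁ h₁c hy hyU)
  · exact Or.inr (hU.subset_of_isPreconnected h₂ h₂c hy hyU)
  · exact absurd hy hyM

end IsChamber

lemma exists_eval_mul_eval_neg_of_isChamber {α : Fin n → AffForm} {f : AffForm} {I : Set ℝ}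
    {lo hi : ℝ} {U₁ U₂ : Set Pt} (hI : Convex ℝ I) (hIlh : I ⊆ Icc lo hi)
    (hpar : ∀ k, (α k).Parallel f → (α k).line ∩ f.eval ⁻¹' I = ∅)
    (hU₁ : IsChamber α U₁) (hU₂ : IsChamber α U₂) (hU₁I : U₁ ⊆ f.eval ⁻¹' I)
    (hU₂I : U₂ ⊆ f.eval ⁻¹' I) (hb₁ : ¬ Bornology.IsBounded U₁)
    (hb₂ : ¬ Bornology.IsBounded U₂) (hne : U₁ ≠ U₂) :
    ∃ x ∈ U₁, ∃ y ∈ U₂, ∀ k, ¬ f.Parallel (α k) → (α k).eval x * (α k).eval y < 0 := by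
  have hfar : ∀ᶠ T in atTop, ∀ k, ¬ f.Parallel (α k) → ∀ p, f.eval p ∈ Icc lo hi →
      T < |f.perp.eval p| → 0 < f.cross (α k) * f.perp.eval p * (α k).eval p :=
    eventually_all.mpr fun k => by
      by_cases hk : f.Parallel (α k)
      · exact .of_forall fun _ h => absurd hk h
      · exact (AffForm.eventually_pos_cross_mul_perp_eval_mul_eval hk lo hi).mono
          fun _ h _ => h
  obtain ⟨T, hT, hT0⟩ := (hfar.and (eventually_ge_atTop 0)).exists
  set B := f.eval ⁻¹' I
  set Rp := B ∩ f.perp.eval ⁻¹' Ioi T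
  set Rm := B ∩ f.perp.eval ⁻¹' Iio (-T)
  have hsign : ∀ k, ¬ f.Parallel (α k) → ∀ p ∈ B, T < |f.perp.eval p| →
      0 < f.cross (α k) * f.perp.eval p * (α k).eval p :=
    fun k hk p hp => hT k hk p (hIlh hp)
  have hcompl : ∀ p ∈ B, T < |f.perp.eval p| → p ∈ complement α := by
    intro p hp ht k hk0
    by_cases hk : (α k).Parallel f
    · exact (hpar k hk).subset ⟨hk0, hp⟩
    · have := hsign k (fun h => hk h.symm) p hp ht
      rw [hk0, mul_zero] at this
      exact this.false
  have hB : Convex ℝ B := f.convex_preimage_eval hI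
  have hRp : IsPreconnected Rp ∧ Rp ⊆ complement α :=
    ⟨(hB.inter (f.perp.convex_preimage_eval (convex_Ioi T))).isPreconnected,
      fun p hp => hcompl p hp.1 (hp.2.trans_le (le_abs_self _))⟩
  have hRm : IsPreconnected Rm ∧ Rm ⊆ complement α :=
    ⟨(hB.inter (f.perp.convex_preimage_eval (convex_Iio _))).isPreconnected,
      fun p hp => hcompl p hp.1 (lt_neg.mp hp.2 |>.trans_le (neg_le_abs _))⟩
  have hcover : B ⊆ Rp ∪ Rm ∪ {p | f.eval p ∈ Icc lo hi ∧ f.perp.eval p ∈ Icc (-T) T} := by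
    intro p hp
    by_cases h₁ : T < f.perp.eval p
    · exact Or.inl (Or.inl ⟨hp, h₁⟩)
    by_cases h₂ : f.perp.eval p < -T
    · exact Or.inl (Or.inr ⟨hp, h₂⟩)
    exact Or.inr ⟨hIlh hp, not_lt.mp h₂, not_lt.mp h₁⟩
  have hsep : ∀ k, ¬ f.Parallel (α k) → ∀ x ∈ Rp, ∀ y ∈ Rm, (α k).eval x * (α k).eval y < 0 := by
    intro k hk x hx y hy
    have hx' := hsign k hk x hx.1 (hx.2.trans_le (le_abs_self _))
    have hy' := hsign k hk y hy.1 (lt_neg.mp hy.2 |>.trans_le (neg_le_abs _))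
    have htx : 0 < f.perp.eval x := hT0.trans_lt hx.2
    have hty : f.perp.eval y < 0 := hy.2.trans_le (neg_nonpos.mpr hT0)
    have hpos : 0 < f.cross (α k) * (α k).eval x := by nlinarith
    have hneg : f.cross (α k) * (α k).eval y < 0 := by nlinarith
    nlinarith [mul_neg_of_pos_of_neg hpos hneg, sq_nonneg (f.cross (α k))]
  obtain ⟨x₀, hx₀⟩ := hU₁.nonempty
  have hx₀B : ∀ u, f.pointAt (f.eval x₀) u ∈ B := fun u =>
    show f.eval _ ∈ I by rw [f.eval_pointAt]; exact hU₁I hx₀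
  have hp : f.pointAt (f.eval x₀) (T + 1) ∈ Rp :=
    ⟨hx₀B _, show T < f.perp.eval _ by rw [f.perp_eval_pointAt]; linarith⟩
  have hm : f.pointAt (f.eval x₀) (-T - 1) ∈ Rm :=
    ⟨hx₀B _, show f.perp.eval _ < -T by rw [f.perp_eval_pointAt]; linarith⟩
  rcases hU₁.subset_or_subset_of_not_isBounded hb₁ (hU₁I.trans hcover)
      (f.isBounded_eval_perp_eval_mem_Icc _ _ _ _) hRp.1 hRm.1 hRp.2 hRm.2 with h₁ | h₁ <;>
    rcases hU₂.subset_or_subset_of_not_isBounded hb₂ (hU₂I.trans hcover)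
      (f.isBounded_eval_perp_eval_mem_Icc _ _ _ _) hRp.1 hRm.1 hRp.2 hRm.2 with h₂ | h₂
  · exact absurd (hU₁.eq_of_mem hU₂ (h₁ hp) (h₂ hp)) hne
  · exact ⟨_, h₁ hp, _, h₂ hm, fun k hk => hsep k hk _ hp _ hm⟩
  · exact ⟨_, h₁ hm, _, h₂ hp, fun k hk => (mul_comm _ _).trans_lt (hsep k hk _ hp _ hm)⟩
  · exact absurd (hU₁.eq_of_mem hU₂ (h₁ hm) (h₂ hm)) hne

lemma sepSet_eq_filter_not_parallel {α : Fin n → AffForm} {i j : Fin n} {B U1 U2 : Set Pt}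
    (hB : BandData α i j B U1 U2) :
    SepSet α U1 U2 = Finset.univ.filter fun k => ¬ (α k).Parallel (α i) := by
  obtain ⟨-, -, rfl, hpar, hU₁, hU₂, hU₁B, hU₂B, hb₁, hb₂, hne⟩ := hB
  obtain ⟨I, hI, ⟨lo, hi, hIlh⟩, hstrip⟩ := exists_strip_eq_preimage (α i) (α j)
  rw [hstrip] at hpar hU₁B hU₂B
  obtain ⟨x, hx, y, hy, hxy⟩ :=
    exists_eval_mul_eval_neg_of_isChamber hI hIlh hpar hU₁ hU₂ hU₁B hU₂B hb₁ hb₂ hne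
  ext k
  rw [mem_sepSet, Finset.mem_filter, and_iff_right (Finset.mem_univ k)]
  constructor
  · intro hsep hk
    exact AffForm.not_separates_of_subset ((α i).convex_preimage_eval hI).isPreconnected
      (fun p hp h0 => (hpar k hk).subset ⟨h0, hp⟩) hU₁B hU₂B hx hy hsep
  · intro hk
    exact AffForm.separates_of_eval_mul_eval_neg hU₁.isPreconnected hU₂.isPreconnected
      (fun p hp => hU₁.subset_complement hp k) (fun p hp => hU₂.subset_complement hp k) hx hy
      (hxy k fun h => hk h.symm)

lemma delta_eq_zero_iff {α : Fin n → AffForm} {q r : Fin n → ℂ} (hr0 : ∀ i, r i ≠ 0)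
    (hrq : ∀ i, r i ^ 2 = q i) (C C' : Set Pt) :
    Delta α r C C' = 0 ↔ ∏ k ∈ SepSet α C C', q k = 1 := by
  have hP : ∏ k ∈ SepSet α C C', r k ≠ 0 := Finset.prod_ne_zero_iff.mpr fun k _ => hr0 k
  rw [Delta, Finset.prod_inv_distrib, sub_eq_zero, ← mul_eq_one_iff_eq_inv₀ hP, ← sq,
    ← Finset.prod_pow]
  simp only [hrq]

lemma Finset.inv_prod_mul_prod_filter {ι K : Type*} [Fintype ι] [CommGroupWithZero K]
    (p : ι → Prop) [DecidablePred p] {q : ι → K} (hq : ∀ i, q i ≠ 0) :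
    (∏ k, q k)⁻¹ * ∏ k ∈ univ.filter p, q k = (∏ k ∈ univ.filter fun k => ¬ p k, q k)⁻¹ := by
  rw [← Finset.prod_filter_mul_prod_filter_not univ p, mul_inv_rev,
    inv_mul_cancel_right₀ (Finset.prod_ne_zero_iff.mpr fun k _ => hq k)]

theorem statement1_general {n : ℕ} (α : Fin n → AffForm)
    (q r : Fin n → ℂ) (hq : ∀ i, q i ≠ 0) (hr0 : ∀ i, r i ≠ 0) (hrq : ∀ i, r i ^ 2 = q i)
    (i j : Fin n) (B U1 U2 : Set Pt) (hB : BandData α i j B U1 U2) :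
    (Delta α r U1 U2 = 0 ↔
      (∏ k, q k)⁻¹ * ∏ k ∈ Finset.univ.filter (fun k : Fin n => (α k).Parallel (α i)), q k
        = 1) ∧
    (Delta α r U1 U2 = 0 ↔ ∏ k ∈ SepSet α U1 U2, q k = 1) ∧
    (∀ (i' j' : Fin n) (B' U1' U2' : Set Pt), BandData α i' j' B' U1' U2' →
      (α i').Parallel (α i) →
      (Delta α r U1 U2 = 0 ↔ Delta α r U1' U2' = 0)) := by
  have hres := delta_eq_zero_iff (α := α) hr0 hrq U1 U2
  have hsep := sepSet_eq_filter_not_parallel hB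
  refine ⟨?_, hres, fun i' j' B' U1' U2' hB' hpar => ?_⟩
  · rw [hres, hsep, Finset.inv_prod_mul_prod_filter _ hq, inv_eq_one]
  · have hsep' : SepSet α U1 U2 = SepSet α U1' U2' := by
      rw [hsep, sepSet_eq_filter_not_parallel hB']
      exact Finset.filter_congr fun k _ =>
        not_congr ⟨fun h => h.trans hpar.symm, fun h => h.trans hpar⟩
    rw [Delta, Delta, hsep']

/-- A band `B` of `A` is resonant iff `q_∞ · ∏_{H k ∈ P} q k = 1`, where
`P ⊆ A` is the set of lines of `A` parallel to the boundary lines of `B` (including the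
boundary lines themselves); equivalently, iff `∏_{H k ∈ Sep(U_1(B), U_2(B))} q k = 1`.
In particular, whether a band is resonant depends only on the common direction of its
boundary lines. -/
theorem statement1 {n : ℕ} (α : Fin n → AffForm) (hA : IsArrangement α)
    (q r : Fin n → ℂ) (hq : ∀ i, q i ≠ 0) (hr0 : ∀ i, r i ≠ 0) (hrq : ∀ i, r i ^ 2 = q i)
    (i j : Fin n) (B U1 U2 : Set Pt) (hB : BandData α i j B U1 U2) :
    (Delta α r U1 U2 = 0 ↔
      (∏ k, q k)⁻¹ * ∏ k ∈ Finset.univ.filter (fun k : Fin n => (α k).Parallel (α i)), q k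
        = 1) ∧
    (Delta α r U1 U2 = 0 ↔ ∏ k ∈ SepSet α U1 U2, q k = 1) ∧
    (∀ (i' j' : Fin n) (B' U1' U2' : Set Pt), BandData α i' j' B' U1' U2' →
      (α i').Parallel (α i) →
      (Delta α r U1 U2 = 0 ↔ Delta α r U1' U2' = 0)) :=
  statement1_general α q r hq hr0 hrq i j B U1 U2 hB

end
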